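/- arXiv:1803.05640 — 7 statements merged into one kernel-verified Lean document; each statement's English description precedes it below -/
import Mathlib

section
/- Let A be a symmetric negative definite n×n real matrix and B an n×m real matrix, and let γ > 0. Then the condition B^T (-A)^{-1} B ⪯ γ I (equivalently, ‖B^T(-A)^{-1}B‖₂ ≤ γ) holds if and only if the Riccati inequality P A + A P + B B^T + (1/γ²) P B B^T P ⪯ 0 is satisfied by P = γ I. -/
/-!
With `P = γ I` the Riccati matrix collapses to `2γ (-A - γ⁻¹ B Bᵀ)`, so the Riccati inequality
says `γ⁻¹ B Bᵀ ⪯ -A`. Both this and `Bᵀ (-A)⁻¹ B ⪯ γ I` are Schur-complement forms of the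
positive semidefiniteness of the block matrix `[[-A, B], [Bᵀ, γ I]]`.
-/

open Matrix
open scoped ComplexOrder

namespace Matrix

variable {m n K : Type*} [Fintype m] [Fintype n] [DecidableEq m] [DecidableEq n]

theorem posSemidef_sub_conjTranspose_mul_inv_mul_iff [Field K] [PartialOrder K] [StarRing K]
    [StarOrderedRing K] {A : Matrix m m K} {D : Matrix n n K} (hA : A.PosDef) (hD : D.PosDef)
    (B : Matrix m n K) :
    (D - Bᴴ * A⁻¹ * B).PosSemidef ↔ (A - B * D⁻¹ * Bᴴ).PosSemidef := by
  have := hA.isUnit.invertible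
  have := hD.isUnit.invertible
  exact (hA.fromBlocks₁₁ B D).symm.trans (PosDef.fromBlocks₂₂ A B hD)

omit [Fintype n] [DecidableEq n] in
theorem posSemidef_smul_iff {𝕜 : Type*} [RCLike 𝕜] {M : Matrix n n 𝕜} {c : ℝ} (hc : 0 < c) :
    (c • M).PosSemidef ↔ M.PosSemidef := by
  refine ⟨fun h => ?_, fun h => h.smul hc.le⟩
  simpa [smul_smul, inv_mul_cancel₀ hc.ne'] using h.smul (inv_nonneg.2 hc.le)

theorem inv_smul_one [Field K] {c : K} (hc : c ≠ 0) : (c • (1 : Matrix n n K))⁻¹ = c⁻¹ • 1 :=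
  inv_eq_left_inv <| by rw [smul_mul_smul_comm, inv_mul_cancel₀ hc, one_mul, one_smul]

theorem neg_riccati_smul_one_eq [Field K] (A : Matrix m m K) (B : Matrix m n K) {γ : K}
    (hγ : γ ≠ 0) :
    -((γ • (1 : Matrix m m K)) * A + A * (γ • (1 : Matrix m m K)) + B * Bᵀ +
        (γ ^ 2)⁻¹ • ((γ • (1 : Matrix m m K)) * (B * Bᵀ) * (γ • (1 : Matrix m m K))))
      = (2 * γ) • (-A - B * (γ • (1 : Matrix n n K))⁻¹ * Bᵀ) := by
  rw [inv_smul_one hγ]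
  have hγ2 : (γ ^ 2)⁻¹ * (γ * γ) = 1 := by field_simp
  have h2γ : 2 * γ * γ⁻¹ = 2 := by field_simp
  simp only [Matrix.smul_mul, Matrix.mul_smul, Matrix.one_mul, Matrix.mul_one, smul_smul, smul_sub,
    hγ2, h2γ, one_smul]
  module

end Matrix

theorem stmt_0_general {n m : ℕ} (A : Matrix (Fin n) (Fin n) ℝ) (B : Matrix (Fin n) (Fin m) ℝ)
    (hAneg : (-A).PosDef) (γ : ℝ) (hγ : 0 < γ) :
    (γ • (1 : Matrix (Fin m) (Fin m) ℝ) - Bᵀ * (-A)⁻¹ * B).PosSemidef ↔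
      (-((γ • (1 : Matrix (Fin n) (Fin n) ℝ)) * A + A * (γ • (1 : Matrix (Fin n) (Fin n) ℝ)) +
          B * Bᵀ +
          (γ ^ 2)⁻¹ • ((γ • (1 : Matrix (Fin n) (Fin n) ℝ)) * (B * Bᵀ) *
            (γ • (1 : Matrix (Fin n) (Fin n) ℝ))))).PosSemidef := by
  rw [neg_riccati_smul_one_eq A B hγ.ne', posSemidef_smul_iff (by positivity),
    ← conjTranspose_eq_transpose_of_trivial]
  exact posSemidef_sub_conjTranspose_mul_inv_mul_iff hAneg (PosDef.one.smul hγ) B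

/-- Bounded real lemma for state-space symmetric systems: for symmetric negative
definite `A`, `Bᵀ(-A)⁻¹B ⪯ γI` iff `P = γI` solves the Riccati inequality
`PA + AP + BBᵀ + (1/γ²)PBBᵀP ⪯ 0`. -/
theorem stmt_0 {n m : ℕ} (A : Matrix (Fin n) (Fin n) ℝ) (B : Matrix (Fin n) (Fin m) ℝ)
    (hA : A.IsSymm) (hAneg : (-A).PosDef) (γ : ℝ) (hγ : 0 < γ) :
    (γ • (1 : Matrix (Fin m) (Fin m) ℝ) - Bᵀ * (-A)⁻¹ * B).PosSemidef ↔
      (-((γ • (1 : Matrix (Fin n) (Fin n) ℝ)) * A + A * (γ • (1 : Matrix (Fin n) (Fin n) ℝ)) +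
          B * Bᵀ +
          (γ ^ 2)⁻¹ • ((γ • (1 : Matrix (Fin n) (Fin n) ℝ)) * (B * Bᵀ) *
            (γ • (1 : Matrix (Fin n) (Fin n) ℝ))))).PosSemidef :=
  stmt_0_general A B hAneg γ hγ
end

section
/- Let G be a graph with positive-edge Laplacian L₊ = B₊ W₊ B₊^T (W₊ a positive definite diagonal matrix) and negative edges with incidence matrix B₋ and positive diagonal weight-magnitude matrix W₋. Assume every negative edge joins two vertices in the same connected component of the positive subgraph (i.e., the columns of B₋ lie in the range of L₊). Then the signed Laplacian L = L₊ − B₋ W₋ B₋^T is positive semidefinite if and only if W₋^{-1} ⪰ B₋^T L₊^† B₋, where L₊^† is the Moore–Penrose pseudoinverse of L₊. -/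
open Matrix

/-- `B` is an incidence matrix: each column has one `+1` entry, one `-1` entry,
and all other entries zero. -/
def IsIncidence {n m : ℕ} (B : Matrix (Fin n) (Fin m) ℝ) : Prop :=
  ∀ e, ∃ i j, i ≠ j ∧ B i e = 1 ∧ B j e = -1 ∧ ∀ l, l ≠ i → l ≠ j → B l e = 0

/-- `Lp` satisfies the four Penrose conditions for `L`, i.e. `Lp = L†`. -/
def IsMoorePenrose {n : ℕ} (L Lp : Matrix (Fin n) (Fin n) ℝ) : Prop :=
  L * Lp * L = L ∧ Lp * L * Lp = Lp ∧ (L * Lp)ᵀ = L * Lp ∧ (Lp * L)ᵀ = Lp * L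

private lemma mp_unique {n : ℕ} {L P Q : Matrix (Fin n) (Fin n) ℝ}
    (hP : IsMoorePenrose L P) (hQ : IsMoorePenrose L Q) : P = Q := by
  obtain ⟨p1, p2, p3, p4⟩ := hP
  obtain ⟨q1, q2, q3, q4⟩ := hQ
  have e1 : L * P = L * Q := by
    calc L * P = (L * P)ᵀ := p3.symm
      _ = Pᵀ * Lᵀ := by rw [Matrix.transpose_mul]
      _ = Pᵀ * (L * Q * L)ᵀ := by rw [q1]
      _ = (L * P)ᵀ * (L * Q)ᵀ := by
          simp only [Matrix.transpose_mul, Matrix.mul_assoc]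
      _ = (L * P) * (L * Q) := by rw [p3, q3]
      _ = L * P * L * Q := by simp only [Matrix.mul_assoc]
      _ = L * Q := by rw [p1]
  have e2 : P * L = Q * L := by
    calc P * L = (P * L)ᵀ := p4.symm
      _ = Lᵀ * Pᵀ := by rw [Matrix.transpose_mul]
      _ = (L * Q * L)ᵀ * Pᵀ := by rw [q1]
      _ = (Q * L)ᵀ * (P * L)ᵀ := by
          simp only [Matrix.transpose_mul, Matrix.mul_assoc]
      _ = (Q * L) * (P * L) := by rw [p4, q4]
      _ = Q * (L * P * L) := by simp only [Matrix.mul_assoc]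
      _ = Q * L := by rw [p1]
  calc P = P * L * P := p2.symm
    _ = Q * L * P := by rw [e2]
    _ = Q * (L * P) := by rw [Matrix.mul_assoc]
    _ = Q * (L * Q) := by rw [e1]
    _ = Q * L * Q := by rw [Matrix.mul_assoc]
    _ = Q := q2

private lemma mp_symm {n : ℕ} {L P : Matrix (Fin n) (Fin n) ℝ} (hL : Lᵀ = L)
    (hP : IsMoorePenrose L P) : Pᵀ = P := by
  obtain ⟨p1, p2, p3, p4⟩ := hP
  have hq : IsMoorePenrose L Pᵀ := by
    refine ⟨?_, ?_, ?_, ?_⟩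
    · have h := congrArg Matrix.transpose p1
      simp only [Matrix.transpose_mul, hL, Matrix.mul_assoc] at h ⊢
      exact h
    · have h := congrArg Matrix.transpose p2
      simp only [Matrix.transpose_mul, hL, Matrix.mul_assoc] at h ⊢
      exact h
    · rw [Matrix.transpose_mul, Matrix.transpose_transpose, hL]
      rw [Matrix.transpose_mul, hL] at p4
      exact p4.symm
    · rw [Matrix.transpose_mul, Matrix.transpose_transpose, hL]
      rw [Matrix.transpose_mul, hL] at p3
      exact p3.symm
  exact mp_unique hq ⟨p1, p2, p3, p4⟩

/-- Signed-Laplacian PSD criterion: with `L₊ = B₊W₊B₊ᵀ` and every negative edge inside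
one connected component of the positive subgraph (columns of `B₋` in range of `L₊`),
`L₊ − B₋W₋B₋ᵀ ⪰ 0` iff `W₋⁻¹ ⪰ B₋ᵀ L₊† B₋`. -/
theorem stmt_5 {n mp mm : ℕ} (Bp : Matrix (Fin n) (Fin mp) ℝ) (Bm : Matrix (Fin n) (Fin mm) ℝ)
    (hBp : IsIncidence Bp) (hBm : IsIncidence Bm)
    (wp : Fin mp → ℝ) (hwp : ∀ e, 0 < wp e) (wm : Fin mm → ℝ) (hwm : ∀ e, 0 < wm e)
    (Lplus Ldag : Matrix (Fin n) (Fin n) ℝ)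
    (hLplus : Lplus = Bp * diagonal wp * Bpᵀ)
    (hLdag : IsMoorePenrose Lplus Ldag)
    (hrange : ∀ c, ∃ x, (fun i => Bm i c) = Lplus *ᵥ x) :
    (Lplus - Bm * diagonal wm * Bmᵀ).PosSemidef ↔
      ((diagonal wm)⁻¹ - Bmᵀ * Ldag * Bm).PosSemidef := by
  obtain ⟨p1, p2, p3, p4⟩ := hLdag
  set W : Matrix (Fin mm) (Fin mm) ℝ := diagonal wm with hW
  set Winv : Matrix (Fin mm) (Fin mm) ℝ := diagonal (fun e => (wm e)⁻¹) with hWinvdef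
  have hWWinv : W * Winv = 1 := by
    rw [hW, hWinvdef, diagonal_mul_diagonal]
    convert Matrix.diagonal_one with e
    exact mul_inv_cancel₀ (hwm e).ne'
  have hWinvW : Winv * W = 1 := by
    rw [hW, hWinvdef, diagonal_mul_diagonal]
    convert Matrix.diagonal_one with e
    exact inv_mul_cancel₀ (hwm e).ne'
  have hWinv : (diagonal wm)⁻¹ = Winv := Matrix.inv_eq_right_inv hWWinv
  have hLsym : Lplusᵀ = Lplus := by
    rw [hLplus]
    simp only [Matrix.transpose_mul, Matrix.transpose_transpose, Matrix.diagonal_transpose,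
      Matrix.mul_assoc]
  have hDsym : Ldagᵀ = Ldag := mp_symm hLsym ⟨p1, p2, p3, p4⟩
  -- columns of Bm in range of Lplus
  have hProj : Lplus * Ldag * Bm = Bm := by
    ext i c
    obtain ⟨x, hx⟩ := hrange c
    calc (Lplus * Ldag * Bm) i c = ((Lplus * Ldag) *ᵥ fun k => Bm k c) i := by
          simp [Matrix.mul_apply, Matrix.mulVec, dotProduct]
      _ = ((Lplus * Ldag) *ᵥ (Lplus *ᵥ x)) i := by rw [hx]
      _ = ((Lplus * Ldag * Lplus) *ᵥ x) i := by rw [Matrix.mulVec_mulVec]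
      _ = (Lplus *ᵥ x) i := by rw [p1]
      _ = Bm i c := (congrFun hx i).symm
  set M : Matrix (Fin mm) (Fin mm) ℝ := Bmᵀ * Ldag * Bm with hM
  have hMsym : Mᵀ = M := by
    rw [hM]
    simp only [Matrix.transpose_mul, Matrix.transpose_transpose, hDsym, Matrix.mul_assoc]
  -- trailing-factor versions of the relations (right-associated)
  have r1 : ∀ (k : ℕ) (X : Matrix (Fin mm) (Fin k) ℝ),
      Lplus * (Ldag * (Bm * X)) = Bm * X := fun k X => by
    rw [← Matrix.mul_assoc, ← Matrix.mul_assoc, hProj]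
  have hProjT : Bmᵀ * Ldag * Lplus = Bmᵀ := by
    have h := congrArg Matrix.transpose hProj
    simp only [Matrix.transpose_mul, hDsym, hLsym, Matrix.mul_assoc] at h
    simp only [Matrix.mul_assoc]
    exact h
  have r2 : ∀ (k : ℕ) (X : Matrix (Fin n) (Fin k) ℝ),
      Bmᵀ * (Ldag * (Lplus * X)) = Bmᵀ * X := fun k X => by
    rw [← Matrix.mul_assoc, ← Matrix.mul_assoc, hProjT]
  have r3 : ∀ (k : ℕ) (X : Matrix (Fin n) (Fin k) ℝ),
      Ldag * (Lplus * (Ldag * X)) = Ldag * X := fun k X => by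
    rw [← Matrix.mul_assoc, ← Matrix.mul_assoc, p2]
  have r4 : ∀ (k : ℕ) (X : Matrix (Fin mm) (Fin k) ℝ), Winv * (W * X) = X := fun k X => by
    rw [← Matrix.mul_assoc, hWinvW, Matrix.one_mul]
  have r5 : ∀ (k : ℕ) (X : Matrix (Fin mm) (Fin k) ℝ), W * (Winv * X) = X := fun k X => by
    rw [← Matrix.mul_assoc, hWWinv, Matrix.one_mul]
  have hWsym : Wᵀ = W := by rw [hW]; exact Matrix.diagonal_transpose _
  have a1 : Lplus * (Ldag * Bm) = Bm := by rw [← Matrix.mul_assoc, hProj]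
  have a2 : Bmᵀ * (Ldag * Lplus) = Bmᵀ := by rw [← Matrix.mul_assoc, hProjT]
  have a3 : Ldag * (Lplus * Ldag) = Ldag := by rw [← Matrix.mul_assoc, p2]
  have hWpsd : W.PosSemidef := Matrix.PosSemidef.diagonal (fun e => (hwm e).le)
  have hLpsd : Lplus.PosSemidef := by
    rw [hLplus]
    have hd : (diagonal wp).PosSemidef := Matrix.PosSemidef.diagonal (fun e => (hwp e).le)
    have := hd.mul_mul_conjTranspose_same Bp
    rwa [Matrix.conjTranspose_eq_transpose_of_trivial] at this
  rw [hWinv]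
  constructor
  · intro hS
    set S : Matrix (Fin n) (Fin n) ℝ := Lplus - Bm * W * Bmᵀ with hSdef
    -- (Ldag * Bm)ᵀ * S * (Ldag * Bm) = M - M * W * M
    have hCSC : (Ldag * Bm)ᵀ * S * (Ldag * Bm) = M - M * W * M := by
      simp only [hSdef, hM, Matrix.transpose_mul, hDsym, Matrix.mul_sub, Matrix.sub_mul,
        Matrix.mul_assoc, r1, r2, r3, a1, a2, a3]
    have key : Winv - M = (Winv - M) * W * (Winv - M) + (M - M * W * M) := by
      simp only [Matrix.sub_mul, Matrix.mul_sub, Matrix.mul_assoc, r4, r5, hWWinv, hWinvW,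
        Matrix.mul_one, Matrix.one_mul]
      abel
    have h1 : ((Winv - M) * W * (Winv - M)).PosSemidef := by
      have := hWpsd.mul_mul_conjTranspose_same (Winv - M)
      rwa [Matrix.conjTranspose_eq_transpose_of_trivial, Matrix.transpose_sub, hMsym,
        Matrix.diagonal_transpose] at this
    have h2 : (M - M * W * M).PosSemidef := by
      rw [← hCSC]
      have := hS.conjTranspose_mul_mul_same (Ldag * Bm)
      rwa [Matrix.conjTranspose_eq_transpose_of_trivial] at this
    rw [key]
    exact h1.add h2
  · intro hT
    set K : Matrix (Fin n) (Fin n) ℝ := 1 - Ldag * (Bm * (W * Bmᵀ)) with hKdef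
    have key : Lplus - Bm * W * Bmᵀ =
        Kᵀ * Lplus * K + (Bm * W) * (Winv - M) * (Bm * W)ᵀ := by
      simp only [hKdef, hM, Matrix.transpose_sub, Matrix.transpose_mul, Matrix.transpose_one,
        Matrix.transpose_transpose, Matrix.diagonal_transpose, hDsym, hLsym, ← hW,
        Matrix.mul_sub, Matrix.sub_mul, Matrix.mul_one, Matrix.one_mul,
        Matrix.mul_assoc, r1, r2, r3, r4, r5, a1, a2, a3, hWsym, hWWinv, hWinvW]
      abel
    rw [key]
    have h1 : (Kᵀ * Lplus * K).PosSemidef := by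
      have := hLpsd.conjTranspose_mul_mul_same K
      rwa [Matrix.conjTranspose_eq_transpose_of_trivial] at this
    have h2 : ((Bm * W) * (Winv - M) * (Bm * W)ᵀ).PosSemidef := by
      have := hT.mul_mul_conjTranspose_same (Bm * W)
      rwa [Matrix.conjTranspose_eq_transpose_of_trivial] at this
    exact h1.add h2
end

section
/- Let L₊ be the Laplacian of a positively weighted graph whose positive subgraph is disconnected, and suppose there is a negative edge e = (v_i, v_j) with weight −w (w > 0) joining two different connected components. Then the signed Laplacian L = L₊ − w (e_i − e_j)(e_i − e_j)^T is not positive semidefinite; in fact, there is a vector v (constant 1 on the first component, 1/2 on the second, 0 elsewhere) with v^T L v ≤ −w/4 < 0. -/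
/-! The test vector `v` is a combination of the two component indicators, so it lies in the
kernel of `L₊`; the quadratic form of `L` at `v` is then only the rank-one part,
`-w ((e_i - e_j) ⬝ v)² = -w (1 - 1/2)² = -w/4`. -/

open Matrix

namespace Matrix

variable {ι R : Type*} [Fintype ι]

theorem dotProduct_vecMulVec_mulVec [CommSemiring R] (a b v : ι → R) :
    v ⬝ᵥ (vecMulVec a b *ᵥ v) = (v ⬝ᵥ a) * (b ⬝ᵥ v) := by
  rw [dotProduct_mulVec, vecMul_vecMulVec, smul_dotProduct, smul_eq_mul]

theorem dotProduct_sub_smul_vecMulVec_mulVec_of_mulVec_eq_zero [CommRing R]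
    {A : Matrix ι ι R} {v : ι → R} (hv : A *ᵥ v = 0) (w : R) (u : ι → R) :
    v ⬝ᵥ ((A - w • vecMulVec u u) *ᵥ v) = -w * (u ⬝ᵥ v) ^ 2 := by
  rw [sub_mulVec, dotProduct_sub, hv, dotProduct_zero, smul_mulVec, dotProduct_smul,
    dotProduct_vecMulVec_mulVec, dotProduct_comm v u, smul_eq_mul]
  ring

theorem not_posSemidef_of_dotProduct_mulVec_neg [Ring R] [PartialOrder R] [StarRing R]
    [TrivialStar R] {A : Matrix ι ι R} {v : ι → R} (h : v ⬝ᵥ (A *ᵥ v) < 0) :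
    ¬ A.PosSemidef := fun hA =>
  h.not_ge (by simpa only [star_trivial] using hA.dotProduct_mulVec_nonneg v)

theorem mulVec_ite_mem_ite_mem_eq_zero [DecidableEq ι] [CommSemiring R] {A : Matrix ι ι R}
    {S T : Finset ι} (hST : Disjoint S T)
    (hS : A *ᵥ (fun a => if a ∈ S then (1 : R) else 0) = 0)
    (hT : A *ᵥ (fun a => if a ∈ T then (1 : R) else 0) = 0) (x y : R) :
    A *ᵥ (fun a => if a ∈ S then x else if a ∈ T then y else 0) = 0 := by
  have hsplit : (fun a => if a ∈ S then x else if a ∈ T then y else 0) =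
      x • (fun a => if a ∈ S then (1 : R) else 0) +
        y • (fun a => if a ∈ T then (1 : R) else 0) := by
    funext a
    by_cases haS : a ∈ S
    · simp [haS, Finset.disjoint_left.mp hST haS]
    · by_cases haT : a ∈ T <;> simp [haS, haT]
  rw [hsplit, mulVec_add, mulVec_smul, mulVec_smul, hS, hT, smul_zero, smul_zero, add_zero]

end Matrix

theorem stmt_6_general {n : ℕ} (Lplus : Matrix (Fin n) (Fin n) ℝ)
    (S T : Finset (Fin n)) (hST : Disjoint S T) (i j : Fin n) (hi : i ∈ S) (hj : j ∈ T)
    (hS : Lplus *ᵥ (fun v => if v ∈ S then (1 : ℝ) else 0) = 0)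
    (hT : Lplus *ᵥ (fun v => if v ∈ T then (1 : ℝ) else 0) = 0)
    (w : ℝ) (hw : 0 < w)
    (L : Matrix (Fin n) (Fin n) ℝ)
    (hL : L = Lplus - w • vecMulVec (Pi.single i (1 : ℝ) - Pi.single j 1)
      (Pi.single i (1 : ℝ) - Pi.single j 1))
    (v : Fin n → ℝ)
    (hv : v = fun a => if a ∈ S then (1 : ℝ) else if a ∈ T then 1 / 2 else 0) :
    ¬ L.PosSemidef ∧ v ⬝ᵥ (L *ᵥ v) ≤ -w / 4 ∧ -w / 4 < 0 := by
  have hjS : j ∉ S := Finset.disjoint_right.mp hST hj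
  have hLv : Lplus *ᵥ v = 0 := hv ▸ mulVec_ite_mem_ite_mem_eq_zero hST hS hT 1 (1 / 2)
  have hedge : (Pi.single i 1 - Pi.single j 1) ⬝ᵥ v = 1 / 2 := by
    rw [sub_dotProduct, single_dotProduct, single_dotProduct]
    simp only [hv, hi, hj, hjS, if_true, if_false]
    norm_num
  have hquad : v ⬝ᵥ (L *ᵥ v) = -w / 4 := by
    rw [hL, dotProduct_sub_smul_vecMulVec_mulVec_of_mulVec_eq_zero hLv, hedge]
    ring
  have hneg : -w / 4 < 0 := by linarith
  exact ⟨not_posSemidef_of_dotProduct_mulVec_neg (hquad ▸ hneg), hquad.le, hneg⟩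

/-- If a negative edge `(i,j)` of weight `-w` joins two different connected components
`S` and `T` of the positive subgraph (indicators of `S` and `T` are in the kernel of
`L₊`), then the signed Laplacian `L₊ − w(e_i−e_j)(e_i−e_j)ᵀ` is not PSD: the vector `v`
which is `1` on `S`, `1/2` on `T` and `0` elsewhere gives `vᵀLv ≤ −w/4 < 0`. -/
theorem stmt_6 {n : ℕ} (Lplus : Matrix (Fin n) (Fin n) ℝ) (hLplus : Lplus.PosSemidef)
    (S T : Finset (Fin n)) (hST : Disjoint S T) (i j : Fin n) (hi : i ∈ S) (hj : j ∈ T)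
    (hS : Lplus *ᵥ (fun v => if v ∈ S then (1 : ℝ) else 0) = 0)
    (hT : Lplus *ᵥ (fun v => if v ∈ T then (1 : ℝ) else 0) = 0)
    (w : ℝ) (hw : 0 < w)
    (L : Matrix (Fin n) (Fin n) ℝ)
    (hL : L = Lplus - w • vecMulVec (Pi.single i (1 : ℝ) - Pi.single j 1)
      (Pi.single i (1 : ℝ) - Pi.single j 1))
    (v : Fin n → ℝ)
    (hv : v = fun a => if a ∈ S then (1 : ℝ) else if a ∈ T then 1 / 2 else 0) :
    ¬ L.PosSemidef ∧ v ⬝ᵥ (L *ᵥ v) ≤ -w / 4 ∧ -w / 4 < 0 :=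
  stmt_6_general Lplus S T hST i j hi hj hS hT w hw L hL v hv
end

section
/- Let L be a real symmetric positive semidefinite n×n matrix with eigenvalues 0 = λ₁ < λ₂ ≤ … ≤ λ_n, eigenvector 𝟙 for eigenvalue 0, and let E, C^T be vectors in ℝ^n orthogonal to 𝟙. Then the H∞-norm of the transfer function G(s) = C (sI + L)^{-1} E, i.e., sup over real ω of |C (jωI + L)^{-1} E|, is at most ‖C‖₂ ‖E‖₂ / λ₂. -/
/-!
If `jωI + L` is singular, Mathlib's `⁻¹` returns `0` and there is nothing to prove; in particular
`ω ≠ 0`, as `L𝟙 = 0`. Write `x = u + j v` for the solution of `(jωI + L) x = E`. Splitting into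
real and imaginary parts gives `L u - ω v = E` and `L v + ω u = 0`. Pairing both with `𝟙`, which
the symmetric `L` annihilates from either side, shows `u, v ⊥ 𝟙`. Pairing the first equation with
`u` and the second with `v`, the cross terms `ω u·v` cancel, so `u·E = u·Lu + v·Lv ≥ λ₂ ‖x‖²`.
Cauchy–Schwarz then gives `‖x‖ ≤ ‖E‖ / λ₂` and `|C·x| ≤ ‖C‖ ‖x‖`.
-/

open Matrix

theorem le_div_of_mul_sq_le_mul {s b c : ℝ} (hs : 0 ≤ s) (hb : 0 ≤ b) (hc : 0 < c)
    (h : c * s ^ 2 ≤ s * b) : s ≤ b / c := by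
  rw [le_div_iff₀ hc]
  rcases hs.eq_or_lt with rfl | hs
  · simpa using hb
  · nlinarith

namespace Matrix

variable {ι : Type*} [Fintype ι]

theorem one_dotProduct_mulVec_eq_zero {L : Matrix ι ι ℝ} (hsym : L.IsSymm) (hL1 : L *ᵥ 1 = 0)
    (w : ι → ℝ) : 1 ⬝ᵥ (L *ᵥ w) = 0 := by
  rw [dotProduct_mulVec, ← mulVec_transpose, hsym.eq, hL1, zero_dotProduct]

theorem gap_mul_sum_sq_add_le_dotProduct {L : Matrix ι ι ℝ} (hsym : L.IsSymm)
    (hL1 : L *ᵥ 1 = 0) {lam2 : ℝ}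
    (hgap : ∀ x : ι → ℝ, x ⬝ᵥ 1 = 0 → lam2 * ∑ i, x i ^ 2 ≤ x ⬝ᵥ (L *ᵥ x))
    {ω : ℝ} (hω : ω ≠ 0) {u v E : ι → ℝ} (hE : E ⬝ᵥ 1 = 0)
    (hre : L *ᵥ u - ω • v = E) (him : L *ᵥ v + ω • u = 0) :
    lam2 * (∑ i, u i ^ 2 + ∑ i, v i ^ 2) ≤ u ⬝ᵥ E := by
  have hu : u ⬝ᵥ 1 = 0 := by
    have h := congrArg (1 ⬝ᵥ ·) him
    simp only [dotProduct_add, dotProduct_smul, one_dotProduct_mulVec_eq_zero hsym hL1,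
      dotProduct_zero, smul_eq_mul, zero_add] at h
    rw [dotProduct_comm]
    exact (mul_eq_zero.1 h).resolve_left hω
  have hv : v ⬝ᵥ 1 = 0 := by
    have h := congrArg (1 ⬝ᵥ ·) hre
    simp only [dotProduct_sub, dotProduct_smul, one_dotProduct_mulVec_eq_zero hsym hL1,
      smul_eq_mul, zero_sub, dotProduct_comm 1 E, hE, neg_eq_zero] at h
    rw [dotProduct_comm]
    exact (mul_eq_zero.1 h).resolve_left hω
  have hEu : u ⬝ᵥ E = u ⬝ᵥ (L *ᵥ u) - ω * (u ⬝ᵥ v) := by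
    rw [← hre, dotProduct_sub, dotProduct_smul, smul_eq_mul]
  have hv0 : v ⬝ᵥ (L *ᵥ v) + ω * (u ⬝ᵥ v) = 0 := by
    rw [dotProduct_comm u, ← smul_eq_mul, ← dotProduct_smul, ← dotProduct_add, him,
      dotProduct_zero]
  linarith [hgap u hu, hgap v hv]

theorem sqrt_sum_sq_add_le_of_gap_mul_le {lam2 : ℝ} (hlam2 : 0 < lam2) {u v E : ι → ℝ}
    (h : lam2 * (∑ i, u i ^ 2 + ∑ i, v i ^ 2) ≤ u ⬝ᵥ E) :
    √(∑ i, u i ^ 2 + ∑ i, v i ^ 2) ≤ √(∑ i, E i ^ 2) / lam2 := by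
  have hv : 0 ≤ ∑ i, v i ^ 2 := by positivity
  refine le_div_of_mul_sq_le_mul (Real.sqrt_nonneg _) (Real.sqrt_nonneg _) hlam2 ?_
  calc lam2 * √(∑ i, u i ^ 2 + ∑ i, v i ^ 2) ^ 2
      = lam2 * (∑ i, u i ^ 2 + ∑ i, v i ^ 2) := by rw [Real.sq_sqrt (by positivity)]
    _ ≤ ∑ i, u i * E i := h
    _ ≤ √(∑ i, u i ^ 2) * √(∑ i, E i ^ 2) := Real.sum_mul_le_sqrt_mul_sqrt _ _ _
    _ ≤ √(∑ i, u i ^ 2 + ∑ i, v i ^ 2) * √(∑ i, E i ^ 2) := by gcongr; linarith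

theorem re_map_ofReal_mulVec (L : Matrix ι ι ℝ) (x : ι → ℂ) (i : ι) :
    ((L.map (↑) *ᵥ x) i).re = (L *ᵥ fun j => (x j).re) i := by
  simp [mulVec, dotProduct, Complex.re_sum]

theorem im_map_ofReal_mulVec (L : Matrix ι ι ℝ) (x : ι → ℂ) (i : ι) :
    ((L.map (↑) *ᵥ x) i).im = (L *ᵥ fun j => (x j).im) i := by
  simp [mulVec, dotProduct, Complex.im_sum]

theorem re_im_of_smul_I_add_map_ofReal_mulVec [DecidableEq ι] {L : Matrix ι ι ℝ} {ω : ℝ}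
    {x : ι → ℂ} {E : ι → ℝ}
    (h : (((ω : ℂ) * Complex.I) • 1 + L.map (↑)) *ᵥ x = fun i => (E i : ℂ)) :
    L *ᵥ (fun i => (x i).re) - ω • (fun i => (x i).im) = E ∧
      L *ᵥ (fun i => (x i).im) + ω • (fun i => (x i).re) = 0 := by
  rw [add_mulVec, smul_mulVec, one_mulVec] at h
  constructor <;> ext i
  · simpa [re_map_ofReal_mulVec, sub_eq_neg_add] using congrArg Complex.re (congrFun h i)
  · simpa [im_map_ofReal_mulVec, add_comm] using congrArg Complex.im (congrFun h i)

theorem ne_zero_of_isUnit_det_smul_I_add_map_ofReal [DecidableEq ι] [Nonempty ι]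
    {L : Matrix ι ι ℝ} (hL1 : L *ᵥ 1 = 0) {ω : ℝ}
    (h : IsUnit ((((ω : ℂ) * Complex.I) • 1 + L.map (↑)) : Matrix ι ι ℂ).det) : ω ≠ 0 := by
  rintro rfl
  refine h.ne_zero (exists_mulVec_eq_zero_iff.1 ⟨1, one_ne_zero, ?_⟩)
  ext i
  simpa [mulVec, dotProduct] using congrArg ((↑) : ℝ → ℂ) (congrFun hL1 i)

theorem norm_ofReal_dotProduct_le (C : ι → ℝ) (x : ι → ℂ) :
    ‖(fun i => (C i : ℂ)) ⬝ᵥ x‖ ≤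
      √(∑ i, C i ^ 2) * √(∑ i, (x i).re ^ 2 + ∑ i, (x i).im ^ 2) := by
  calc ‖(fun i => (C i : ℂ)) ⬝ᵥ x‖ ≤ ∑ i, ‖(C i : ℂ) * x i‖ := norm_sum_le _ _
    _ = ∑ i, |C i| * ‖x i‖ := by simp only [norm_mul, Complex.norm_real, Real.norm_eq_abs]
    _ ≤ √(∑ i, |C i| ^ 2) * √(∑ i, ‖x i‖ ^ 2) := Real.sum_mul_le_sqrt_mul_sqrt _ _ _
    _ = _ := by
      rw [← Finset.sum_add_distrib]
      simp only [sq_abs, Complex.sq_norm, Complex.normSq_apply, ← sq]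

end Matrix

theorem stmt_8_general {n : ℕ} (L : Matrix (Fin n) (Fin n) ℝ) (hL : L.PosSemidef)
    (hL1 : L *ᵥ (fun _ => (1 : ℝ)) = 0) (lam2 : ℝ) (hlam2 : 0 < lam2)
    (hgap : ∀ x : Fin n → ℝ, x ⬝ᵥ (fun _ => (1 : ℝ)) = 0 →
      lam2 * (∑ i, x i ^ 2) ≤ x ⬝ᵥ (L *ᵥ x))
    (C E : Fin n → ℝ)
    (hE : E ⬝ᵥ (fun _ => (1 : ℝ)) = 0) :
    ∀ ω : ℝ, ‖(fun i => (C i : ℂ)) ⬝ᵥ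
        ((((ω : ℂ) * Complex.I) • (1 : Matrix (Fin n) (Fin n) ℂ) +
          L.map (fun x : ℝ => (x : ℂ)))⁻¹ *ᵥ (fun i => (E i : ℂ)))‖ ≤
      Real.sqrt (∑ i, C i ^ 2) * Real.sqrt (∑ i, E i ^ 2) / lam2 := by
  intro ω
  set M : Matrix (Fin n) (Fin n) ℂ := ((ω : ℂ) * Complex.I) • 1 + L.map (↑)
  by_cases hM : IsUnit M.det
  swap
  · rw [nonsing_inv_apply_not_isUnit _ hM, zero_mulVec, dotProduct_zero, norm_zero]
    positivity
  cases isEmpty_or_nonempty (Fin n)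
  · simp only [dotProduct, Finset.univ_eq_empty, Finset.sum_empty, norm_zero]
    positivity
  have hsym : L.IsSymm := isHermitian_iff_isSymm.1 hL.isHermitian
  obtain ⟨hre, him⟩ := re_im_of_smul_I_add_map_ofReal_mulVec
    (x := M⁻¹ *ᵥ fun i => (E i : ℂ)) (by rw [mulVec_mulVec, mul_nonsing_inv _ hM, one_mulVec])
  have hω := ne_zero_of_isUnit_det_smul_I_add_map_ofReal hL1 hM
  calc _ ≤ _ := norm_ofReal_dotProduct_le C _
    _ ≤ √(∑ i, C i ^ 2) * (√(∑ i, E i ^ 2) / lam2) := by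
      gcongr
      exact sqrt_sum_sq_add_le_of_gap_mul_le hlam2
        (gap_mul_sum_sq_add_le_dotProduct hsym hL1 hgap hω hE hre him)
    _ = _ := (mul_div_assoc ..).symm

/-- For a PSD Laplacian `L` with `L𝟙 = 0` and spectral gap `λ₂ > 0` on `𝟙^⊥`, and vectors
`C, E ⊥ 𝟙`, the H∞-norm `sup_ω |C(jωI + L)⁻¹E|` is at most `‖C‖₂‖E‖₂/λ₂`. -/
theorem stmt_8 {n : ℕ} (L : Matrix (Fin n) (Fin n) ℝ) (hL : L.PosSemidef)
    (hL1 : L *ᵥ (fun _ => (1 : ℝ)) = 0) (lam2 : ℝ) (hlam2 : 0 < lam2)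
    (hgap : ∀ x : Fin n → ℝ, x ⬝ᵥ (fun _ => (1 : ℝ)) = 0 →
      lam2 * (∑ i, x i ^ 2) ≤ x ⬝ᵥ (L *ᵥ x))
    (C E : Fin n → ℝ) (hC : C ⬝ᵥ (fun _ => (1 : ℝ)) = 0)
    (hE : E ⬝ᵥ (fun _ => (1 : ℝ)) = 0) :
    ∀ ω : ℝ, ‖(fun i => (C i : ℂ)) ⬝ᵥ
        ((((ω : ℂ) * Complex.I) • (1 : Matrix (Fin n) (Fin n) ℂ) +
          L.map (fun x : ℝ => (x : ℂ)))⁻¹ *ᵥ (fun i => (E i : ℂ)))‖ ≤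
      Real.sqrt (∑ i, C i ^ 2) * Real.sqrt (∑ i, E i ^ 2) / lam2 :=
  stmt_8_general L hL hL1 lam2 hlam2 hgap C E hE
end

section
/- Let A be a symmetric negative definite n×n real matrix and B an n×m real matrix. Then sup_{ω ∈ ℝ} ‖B^T (jωI − A)^{-1} B‖₂ = ‖B^T (−A)^{-1} B‖₂; i.e., the H∞-norm of the state-space symmetric system G(s) = B^T(sI − A)^{-1}B is attained at frequency zero. -/
/-!
Complexify `-A = W diag(μ) Wᴴ` with `W` unitary and `μ > 0`. Then
`G(s) = Cᴴ diag((s + μᵢ)⁻¹) C` with `C = Wᴴ B`, and for `Re s ≥ 0` we have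
`‖(s + μᵢ)⁻¹‖ ≤ μᵢ⁻¹`, the value of the diagonal at `s = 0`. The norm of a sandwich
`Cᴴ diag(d) C` is monotone in `‖dᵢ‖`: if `‖dᵢ‖ ≤ eᵢ`, write `diag(d) = E^½ U E^½` with `‖U‖ ≤ 1`,
so `‖Cᴴ diag(d) C‖ ≤ ‖E^½ C‖² = ‖Cᴴ diag(e) C‖` by the C⋆-identity. Finally `G(0)` is the
complexification of the real matrix `Bᵀ(-A)⁻¹B`, which does not change its operator norm.
-/

open Matrix
open scoped Matrix.Norms.L2Operator

theorem Complex.le_norm_add_ofReal {z : ℂ} (hz : 0 ≤ z.re) (μ : ℝ) : μ ≤ ‖z + μ‖ :=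
  calc μ ≤ (z + μ).re := by simpa using hz
    _ ≤ ‖z + μ‖ := Complex.re_le_norm _

theorem EuclideanSpace.norm_sq_ofReal_add_ofReal_mul_I {n : Type*} [Fintype n] (a b : n → ℝ) :
    ‖(WithLp.toLp 2 fun i => (a i : ℂ) + b i * Complex.I : EuclideanSpace ℂ n)‖ ^ 2 =
      ‖(WithLp.toLp 2 a : EuclideanSpace ℝ n)‖ ^ 2 +
        ‖(WithLp.toLp 2 b : EuclideanSpace ℝ n)‖ ^ 2 := by
  simp [EuclideanSpace.norm_sq_eq, ← Complex.normSq_eq_norm_sq, Complex.normSq_add_mul_I,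
    Finset.sum_add_distrib]

namespace Matrix

variable {m n : Type*}

theorem map_nonsing_inv [Fintype n] [DecidableEq n] {K L : Type*} [Field K] [Field L]
    (f : K →+* L) (M : Matrix n n K) : M⁻¹.map f = (M.map f)⁻¹ := by
  have hdet : f M.det = (M.map f).det := f.map_det M
  have hadj : M.adjugate.map f = (M.map f).adjugate := f.map_adjugate M
  ext i j
  simp [inv_def, ← hdet, ← hadj]

theorem map_ofReal_mulVec [Fintype n] (M : Matrix m n ℝ) (x : n → ℂ) :
    M.map ((↑) : ℝ → ℂ) *ᵥ x =
      fun i => ((M *ᵥ fun j => (x j).re) i : ℂ) +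
        ((M *ᵥ fun j => (x j).im) i : ℂ) * Complex.I := by
  funext i
  apply Complex.ext <;> simp [mulVec, dotProduct, Complex.re_sum, Complex.im_sum]

theorem l2_opNorm_map_ofReal [Fintype m] [Fintype n] [DecidableEq n] (M : Matrix m n ℝ) :
    ‖M.map ((↑) : ℝ → ℂ)‖ = ‖M‖ := by
  refine le_antisymm ?_ ?_
  · rw [l2_opNorm_def]
    refine ContinuousLinearMap.opNorm_le_bound _ (norm_nonneg M) fun x => ?_
    set a : EuclideanSpace ℝ n := WithLp.toLp 2 fun j => (x j).re
    set b : EuclideanSpace ℝ n := WithLp.toLp 2 fun j => (x j).im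
    have hx : x = WithLp.toLp 2 fun j => (a j : ℂ) + b j * Complex.I := by
      ext j; simp [a, b]
    have hMa := M.l2_opNorm_mulVec a
    have hMb := M.l2_opNorm_mulVec b
    refine le_of_sq_le_sq ?_ (by positivity)
    calc _ = ‖(EuclideanSpace.equiv m ℝ).symm (M *ᵥ a)‖ ^ 2 +
          ‖(EuclideanSpace.equiv m ℝ).symm (M *ᵥ b)‖ ^ 2 := by
          simp [toLpLin_apply, map_ofReal_mulVec, EuclideanSpace.norm_sq_ofReal_add_ofReal_mul_I,
            a, b]
      _ ≤ (‖M‖ * ‖a‖) ^ 2 + (‖M‖ * ‖b‖) ^ 2 := by gcongr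
      _ = (‖M‖ * ‖x‖) ^ 2 := by
          rw [hx, mul_pow, mul_pow, mul_pow, EuclideanSpace.norm_sq_ofReal_add_ofReal_mul_I]; ring
  · rw [l2_opNorm_def]
    refine ContinuousLinearMap.opNorm_le_bound _ (norm_nonneg _) fun x => ?_
    have h := (M.map ((↑) : ℝ → ℂ)).l2_opNorm_mulVec (WithLp.toLp 2 fun j => (x j : ℂ))
    simpa [toLpLin_apply, EuclideanSpace.norm_eq, map_ofReal_mulVec, ← Pi.zero_def] using h

variable {𝕜 : Type*} [RCLike 𝕜]

theorem l2_opNorm_conjTranspose_mul_diagonal_mul_le [Fintype m] [Fintype n] [DecidableEq m]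
    [DecidableEq n] (K : Matrix m n 𝕜) {u : m → 𝕜} (hu : ‖u‖ ≤ 1) :
    ‖Kᴴ * diagonal u * K‖ ≤ ‖Kᴴ * K‖ :=
  calc ‖Kᴴ * diagonal u * K‖ ≤ ‖Kᴴ‖ * ‖diagonal u‖ * ‖K‖ :=
        (l2_opNorm_mul _ _).trans (by gcongr; exact l2_opNorm_mul _ _)
    _ ≤ ‖K‖ * 1 * ‖K‖ := by rw [l2_opNorm_conjTranspose, l2_opNorm_diagonal]; gcongr
    _ = ‖Kᴴ * K‖ := by rw [mul_one, l2_opNorm_conjTranspose_mul_self]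

theorem l2_opNorm_conjTranspose_mul_diagonal_mul_mono [Fintype m] [Fintype n] [DecidableEq m]
    [DecidableEq n] (C : Matrix m n 𝕜) {d : m → 𝕜} {e : m → ℝ} (hde : ∀ i, ‖d i‖ ≤ e i) :
    ‖Cᴴ * diagonal d * C‖ ≤ ‖Cᴴ * diagonal (fun i => (e i : 𝕜)) * C‖ := by
  have he i : 0 ≤ e i := (norm_nonneg _).trans (hde i)
  set K := diagonal (fun i => (√(e i) : 𝕜)) * C
  have hconj (u : m → 𝕜) :
      Kᴴ * diagonal u * K = Cᴴ * diagonal (fun i => (e i : 𝕜) * u i) * C := by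
    have hdiag : star (diagonal fun i => (√(e i) : 𝕜)) * diagonal u *
        diagonal (fun i => (√(e i) : 𝕜)) = diagonal (fun i => (e i : 𝕜) * u i) := by
      rw [star_eq_conjTranspose, diagonal_conjTranspose, diagonal_mul_diagonal,
        diagonal_mul_diagonal]
      congr 1
      funext i
      rw [Pi.star_apply, RCLike.star_def, RCLike.conj_ofReal, mul_comm, ← mul_assoc,
        ← RCLike.ofReal_mul, Real.mul_self_sqrt (he i)]
    simp only [K, conjTranspose_mul, ← star_eq_conjTranspose, ← hdiag, Matrix.mul_assoc]
  have hd : d = fun i => (e i : 𝕜) * (d i / e i) := by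
    funext i
    rcases (he i).eq_or_lt with h | h
    · simp [norm_le_zero_iff.1 ((hde i).trans h.symm.le)]
    · rw [mul_div_cancel₀]
      exact_mod_cast h.ne'
  calc ‖Cᴴ * diagonal d * C‖ = ‖Kᴴ * diagonal (fun i => d i / e i) * K‖ := by rw [hconj, ← hd]
    _ ≤ ‖Kᴴ * K‖ := by
        refine l2_opNorm_conjTranspose_mul_diagonal_mul_le K
          ((pi_norm_le_iff_of_nonneg zero_le_one).2 fun i => ?_)
        rw [norm_div, RCLike.norm_ofReal, abs_of_nonneg (he i)]
        exact div_le_one_of_le₀ (hde i) (he i)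
    _ = ‖Cᴴ * diagonal (fun i => (e i : 𝕜)) * C‖ := by
        rw [← Matrix.mul_one (Kᴴ), ← diagonal_one, hconj]; simp

theorem IsHermitian.map_ofReal_eq_unitary_mul_diagonal [Fintype n] [DecidableEq n]
    {S : Matrix n n ℝ} (hS : S.IsHermitian) :
    ∃ W ∈ unitaryGroup n ℂ,
      S.map ((↑) : ℝ → ℂ) = W * diagonal (fun i => (hS.eigenvalues i : ℂ)) * star W := by
  set U : Matrix n n ℝ := (hS.eigenvectorUnitary : Matrix n n ℝ)
  have hmul (M N : Matrix n n ℝ) : (M * N).map ((↑) : ℝ → ℂ) = M.map (↑) * N.map (↑) :=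
    Matrix.map_mul (f := Complex.ofRealHom)
  have hstar : star (U.map ((↑) : ℝ → ℂ)) = (star U).map (↑) :=
    (conjTranspose_map _ fun x => (Complex.conj_ofReal x).symm).symm
  refine ⟨U.map (↑), ?_, ?_⟩
  · rw [mem_unitaryGroup_iff, hstar, ← hmul, Unitary.mul_star_self_of_mem hS.eigenvectorUnitary.2,
      Matrix.map_one _ Complex.ofReal_zero Complex.ofReal_one]
  · conv_lhs => rw [hS.spectral_theorem]
    simp [hstar, hmul, diagonal_map, U]

theorem inv_smul_one_add_unitary_mul_diagonal_mul_star [Fintype n] [DecidableEq n] {K : Type*}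
    [Field K] [StarRing K] {W : Matrix n n K} (hW : W ∈ unitaryGroup n K) {d : n → K} {z : K}
    (hz : ∀ i, z + d i ≠ 0) :
    (z • 1 + W * diagonal d * star W)⁻¹ = W * diagonal (fun i => (z + d i)⁻¹) * star W := by
  have hconj : z • 1 + W * diagonal d * star W = W * diagonal (fun i => z + d i) * star W := by
    rw [← diagonal_add, ← smul_one_eq_diagonal, Matrix.mul_add, Matrix.add_mul, Matrix.mul_smul,
      Matrix.mul_one, Matrix.smul_mul, Unitary.mul_star_self_of_mem hW]
  rw [hconj]
  refine inv_eq_right_inv ?_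
  calc W * diagonal (fun i => z + d i) * star W * (W * diagonal (fun i => (z + d i)⁻¹) * star W)
      = W * (diagonal (fun i => z + d i) * (star W * W) * diagonal (fun i => (z + d i)⁻¹)) *
          star W := by
        simp only [Matrix.mul_assoc]
    _ = 1 := by
        rw [Unitary.star_mul_self_of_mem hW, Matrix.mul_one, diagonal_mul_diagonal]
        simp [hz, Unitary.mul_star_self_of_mem hW]

end Matrix

section TransferMatrix

variable {m n : Type*} [Fintype n] [DecidableEq n]

/-- The transfer matrix `G(s)` of the state-space symmetric system `(A, B, Bᵀ)`. -/
noncomputable def transferMatrix (A : Matrix n n ℝ) (B : Matrix n m ℝ) (s : ℂ) : Matrix m m ℂ :=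
  (B.map (fun x : ℝ => (x : ℂ)))ᵀ * (s • (1 : Matrix n n ℂ) - A.map (fun x : ℝ => (x : ℂ)))⁻¹ *
    B.map (fun x : ℝ => (x : ℂ))

theorem transferMatrix_zero (A : Matrix n n ℝ) (B : Matrix n m ℝ) :
    transferMatrix A B 0 = (Bᵀ * (-A)⁻¹ * B).map (↑) := by
  let f := Complex.ofRealHom
  change (B.map f)ᵀ * ((0 : ℂ) • (1 : Matrix n n ℂ) - A.map f)⁻¹ * B.map f =
    (Bᵀ * (-A)⁻¹ * B).map f
  rw [zero_smul, zero_sub, ← Matrix.map_neg f (map_neg f), ← map_nonsing_inv, ← transpose_map,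
    Matrix.map_mul, Matrix.map_mul]

theorem norm_transferMatrix_le_norm_transferMatrix_zero [Fintype m] [DecidableEq m]
    {A : Matrix n n ℝ} (hA : (-A).PosDef) (B : Matrix n m ℝ) {s : ℂ} (hs : 0 ≤ s.re) :
    ‖transferMatrix A B s‖ ≤ ‖transferMatrix A B 0‖ := by
  obtain ⟨W, hW, hspec⟩ := hA.isHermitian.map_ofReal_eq_unitary_mul_diagonal
  set μ := hA.isHermitian.eigenvalues
  have hμ : ∀ i, 0 < μ i := hA.eigenvalues_pos
  set C := star W * B.map ((↑) : ℝ → ℂ)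
  have hG {z : ℂ} (hz : 0 ≤ z.re) :
      transferMatrix A B z = Cᴴ * diagonal (fun i => (z + μ i)⁻¹) * C := by
    have hz' i : z + μ i ≠ 0 :=
      norm_pos_iff.1 ((hμ i).trans_le (Complex.le_norm_add_ofReal hz _))
    rw [transferMatrix, sub_eq_add_neg, ← Matrix.map_neg _ Complex.ofReal_neg, hspec,
      inv_smul_one_add_unitary_mul_diagonal_mul_star hW hz']
    simp only [C, conjTranspose_mul, star_eq_conjTranspose, conjTranspose_conjTranspose,
      Matrix.mul_assoc]
    congr 1
    ext
    simp
  rw [hG hs, hG le_rfl]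
  refine (l2_opNorm_conjTranspose_mul_diagonal_mul_mono C (e := fun i => (μ i)⁻¹)
    fun i => ?_).trans_eq ?_
  · rw [norm_inv]
    exact inv_anti₀ (hμ i) (Complex.le_norm_add_ofReal hs _)
  · simp

end TransferMatrix

theorem stmt_10_general {n m : ℕ} (A : Matrix (Fin n) (Fin n) ℝ) (B : Matrix (Fin n) (Fin m) ℝ)
    (hAneg : (-A).PosDef) :
    IsGreatest {r : ℝ | ∃ ω : ℝ, r =
        ‖(B.map (fun x : ℝ => (x : ℂ)))ᵀ *
          (((ω : ℂ) * Complex.I) • (1 : Matrix (Fin n) (Fin n) ℂ) -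
            A.map (fun x : ℝ => (x : ℂ)))⁻¹ * B.map (fun x : ℝ => (x : ℂ))‖}
      ‖Bᵀ * (-A)⁻¹ * B‖ := by
  change IsGreatest {r | ∃ ω : ℝ, r = ‖transferMatrix A B (ω * Complex.I)‖} _
  have hG0 : ‖transferMatrix A B 0‖ = ‖Bᵀ * (-A)⁻¹ * B‖ := by
    rw [transferMatrix_zero, l2_opNorm_map_ofReal]
  refine ⟨⟨0, by rw [Complex.ofReal_zero, zero_mul, hG0]⟩, ?_⟩
  rintro _ ⟨ω, rfl⟩
  exact hG0 ▸ norm_transferMatrix_le_norm_transferMatrix_zero hAneg B (by simp)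

/-- The H∞-norm of a state-space symmetric system is attained at frequency zero:
for symmetric negative definite `A`, `sup_ω ‖Bᵀ(jωI − A)⁻¹B‖₂ = ‖Bᵀ(−A)⁻¹B‖₂`. -/
theorem stmt_10 {n m : ℕ} (A : Matrix (Fin n) (Fin n) ℝ) (B : Matrix (Fin n) (Fin m) ℝ)
    (hA : A.IsSymm) (hAneg : (-A).PosDef) :
    IsGreatest {r : ℝ | ∃ ω : ℝ, r =
        ‖(B.map (fun x : ℝ => (x : ℂ)))ᵀ *
          (((ω : ℂ) * Complex.I) • (1 : Matrix (Fin n) (Fin n) ℂ) -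
            A.map (fun x : ℝ => (x : ℂ)))⁻¹ * B.map (fun x : ℝ => (x : ℂ))‖}
      ‖Bᵀ * (-A)⁻¹ * B‖ :=
  stmt_10_general A B hAneg
end

section
/- Let L₊ be a positive semidefinite signed-free Laplacian (L₊𝟙 = 0) of a connected graph and let B₋ ∈ ℝ^{n×p} have columns in the range of L₊, with W₋ a positive definite diagonal p×p matrix. Then L₊ − B₋ W₋ B₋^T ⪰ 0 if and only if ‖√W₋ B₋^T L₊^† B₋ √W₋‖₂ ≤ 1. -/
open Matrix
open scoped Matrix.Norms.L2Operator

/-!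
Put `M = B₋√W₋` and `Y = L₊†M`. Since the columns of `M` lie in the range of `L₊`, `L₊Y = M`,
so the matrix in the norm is `S = MᵀY = YᵀL₊Y`. Factor `L₊ = CᵀC` and let `K = CY`; then
`S = KᵀK`, so `‖S‖ = ‖K‖²`, and `L₊ - MMᵀ = Cᵀ(1 - KKᵀ)C`, which is positive semidefinite once
`‖K‖ ≤ 1`. Conversely, evaluating the form of `L₊ - MMᵀ` at `Yz` gives
`‖Sz‖² ≤ ⟪z, Sz⟫ ≤ ‖z‖‖Sz‖`, hence `‖S‖ ≤ 1`.
-/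

namespace Matrix

variable {m n p : Type*} [Fintype m] [Fintype n] [Fintype p]

theorem dotProduct_self_eq_norm_sq (v : n → ℝ) : v ⬝ᵥ v = ‖WithLp.toLp 2 v‖ ^ 2 := by
  rw [← real_inner_self_eq_norm_sq, EuclideanSpace.inner_toLp_toLp, star_trivial]

theorem dotProduct_mul_self_le (v w : n → ℝ) :
    (v ⬝ᵥ w) * (v ⬝ᵥ w) ≤ (v ⬝ᵥ v) * (w ⬝ᵥ w) := by
  simpa only [EuclideanSpace.inner_toLp_toLp, star_trivial, dotProduct_comm w v] using
    real_inner_mul_inner_self_le (WithLp.toLp 2 v) (WithLp.toLp 2 w)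

theorem mulVec_dotProduct {R : Type*} [CommSemiring R] (A : Matrix m n R) (x : n → R)
    (y : m → R) : (A *ᵥ x) ⬝ᵥ y = x ⬝ᵥ (Aᵀ *ᵥ y) := by
  rw [dotProduct_transpose_mulVec, dotProduct_comm]

theorem l2_opNorm_le_one_iff [DecidableEq n] (A : Matrix m n ℝ) :
    ‖A‖ ≤ 1 ↔ ∀ x, (A *ᵥ x) ⬝ᵥ (A *ᵥ x) ≤ x ⬝ᵥ x := by
  rw [l2_opNorm_def, ContinuousLinearMap.opNorm_le_iff zero_le_one]
  refine (WithLp.equiv 2 (n → ℝ)).forall_congr fun x => ?_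
  rw [one_mul, dotProduct_self_eq_norm_sq, dotProduct_self_eq_norm_sq,
    sq_le_sq₀ (norm_nonneg _) (norm_nonneg _)]
  rfl

theorem l2_opNorm_le_one_of_mulVec_dotProduct_le [DecidableEq n] (A : Matrix n n ℝ)
    (h : ∀ x, (A *ᵥ x) ⬝ᵥ (A *ᵥ x) ≤ x ⬝ᵥ (A *ᵥ x)) : ‖A‖ ≤ 1 := by
  refine (l2_opNorm_le_one_iff A).2 fun x => ?_
  have hAx := h x
  have hcs := dotProduct_mul_self_le x (A *ᵥ x)
  have hx : 0 ≤ x ⬝ᵥ x := by rw [dotProduct_self_eq_norm_sq]; positivity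
  have hAx' : 0 ≤ (A *ᵥ x) ⬝ᵥ (A *ᵥ x) := by rw [dotProduct_self_eq_norm_sq]; positivity
  nlinarith

theorem posSemidef_one_sub_mul_transpose_self [DecidableEq n] [DecidableEq p] (K : Matrix n p ℝ)
    (hK : ‖K‖ ≤ 1) : (1 - K * Kᵀ).PosSemidef := by
  have hKt : ‖Kᵀ‖ ≤ 1 := by rwa [← conjTranspose_eq_transpose_of_trivial, l2_opNorm_conjTranspose]
  refine .of_dotProduct_mulVec_nonneg (isHermitian_one.sub ?_) fun x => ?_
  · simpa [conjTranspose_eq_transpose_of_trivial] using isHermitian_mul_conjTranspose_self K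
  rw [star_trivial, sub_mulVec, one_mulVec, dotProduct_sub, sub_nonneg, ← mulVec_mulVec,
    dotProduct_mulVec, ← mulVec_transpose]
  exact (l2_opNorm_le_one_iff Kᵀ).1 hKt x

open scoped MatrixOrder in
theorem PosSemidef.exists_eq_transpose_mul_self [DecidableEq n] {L : Matrix n n ℝ}
    (hL : L.PosSemidef) : ∃ C : Matrix n n ℝ, L = Cᵀ * C := by
  have hC : (CFC.sqrt L).PosSemidef := nonneg_iff_posSemidef.1 (CFC.sqrt_nonneg L)
  refine ⟨CFC.sqrt L, ?_⟩
  rw [← conjTranspose_eq_transpose_of_trivial, hC.isHermitian.eq,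
    CFC.sqrt_mul_sqrt_self L (nonneg_iff_posSemidef.2 hL)]

variable {L : Matrix n n ℝ} {M Y : Matrix n p ℝ}

theorem l2_opNorm_transpose_mul_le_one_of_posSemidef_sub [DecidableEq p] (hL : Lᵀ = L)
    (hY : L * Y = M) (h : (L - M * Mᵀ).PosSemidef) : ‖Mᵀ * Y‖ ≤ 1 := by
  have hMY : Mᵀ * Y = Yᵀ * L * Y := by rw [← hY, transpose_mul, hL]
  refine l2_opNorm_le_one_of_mulVec_dotProduct_le _ fun z => ?_
  have hquad : (Y *ᵥ z) ⬝ᵥ (L *ᵥ (Y *ᵥ z)) = z ⬝ᵥ ((Mᵀ * Y) *ᵥ z) := by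
    rw [mulVec_dotProduct, mulVec_mulVec, mulVec_mulVec, hMY]
  have hsq : (Y *ᵥ z) ⬝ᵥ ((M * Mᵀ) *ᵥ (Y *ᵥ z)) = ((Mᵀ * Y) *ᵥ z) ⬝ᵥ ((Mᵀ * Y) *ᵥ z) := by
    rw [← mulVec_mulVec, dotProduct_comm, mulVec_dotProduct, ← mulVec_mulVec]
  have hz := h.dotProduct_mulVec_nonneg (Y *ᵥ z)
  rwa [star_trivial, sub_mulVec, dotProduct_sub, sub_nonneg, hquad, hsq] at hz

theorem posSemidef_sub_of_l2_opNorm_transpose_mul_le_one [DecidableEq n] [DecidableEq p]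
    (hL : L.PosSemidef) (hY : L * Y = M) (h : ‖Mᵀ * Y‖ ≤ 1) : (L - M * Mᵀ).PosSemidef := by
  obtain ⟨C, rfl⟩ := hL.exists_eq_transpose_mul_self
  subst hY
  have hK : ‖C * Y‖ ≤ 1 := by
    have hS : (Cᵀ * C * Y)ᵀ * Y = (C * Y)ᴴ * (C * Y) := by
      simp only [conjTranspose_eq_transpose_of_trivial, transpose_mul, transpose_transpose,
        Matrix.mul_assoc]
    rw [hS, l2_opNorm_conjTranspose_mul_self] at h
    nlinarith [norm_nonneg (C * Y)]
  have hPSD := (posSemidef_one_sub_mul_transpose_self (C * Y) hK).conjTranspose_mul_mul_same C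
  rw [conjTranspose_eq_transpose_of_trivial] at hPSD
  convert hPSD using 1
  simp only [Matrix.mul_sub, Matrix.sub_mul, transpose_mul, transpose_transpose, Matrix.mul_one,
    Matrix.mul_assoc]

theorem posSemidef_sub_mul_transpose_iff [DecidableEq n] [DecidableEq p] (hL : L.PosSemidef)
    (hY : L * Y = M) : (L - M * Mᵀ).PosSemidef ↔ ‖Mᵀ * Y‖ ≤ 1 :=
  ⟨l2_opNorm_transpose_mul_le_one_of_posSemidef_sub (isHermitian_iff_isSymm.1 hL.isHermitian) hY,
    posSemidef_sub_of_l2_opNorm_transpose_mul_le_one hL hY⟩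

theorem mul_mul_eq_self_of_col_eq_mulVec {R : Type*} [Semiring R] {L G : Matrix n n R}
    (hG : L * G * L = L) {k : Type*} {B : Matrix n k R} (hB : ∀ c, ∃ x, (fun i => B i c) = L *ᵥ x) :
    L * G * B = B := by
  choose X hX using hB
  have hBX : B = L * (of X)ᵀ := by
    ext i c
    simpa [mul_apply, mulVec, dotProduct] using congrFun (hX c) i
  rw [hBX, ← Matrix.mul_assoc, hG]

end Matrix

theorem stmt_12_general {n p : ℕ} (Lplus Ldag : Matrix (Fin n) (Fin n) ℝ)
    (hLplus : Lplus.PosSemidef)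
    (hLdag : IsMoorePenrose Lplus Ldag)
    (Bm : Matrix (Fin n) (Fin p) ℝ)
    (hrange : ∀ c, ∃ x, (fun i => Bm i c) = Lplus *ᵥ x)
    (w : Fin p → ℝ) (hw : ∀ i, 0 < w i) :
    (Lplus - Bm * diagonal w * Bmᵀ).PosSemidef ↔
      ‖diagonal (fun i => Real.sqrt (w i)) * (Bmᵀ * Ldag * Bm) *
        diagonal (fun i => Real.sqrt (w i))‖ ≤ 1 := by
  set D := diagonal fun i => Real.sqrt (w i)
  have hDt : Dᵀ = D := diagonal_transpose _
  have hY : Lplus * (Ldag * (Bm * D)) = Bm * D := by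
    rw [← Matrix.mul_assoc, ← Matrix.mul_assoc, mul_mul_eq_self_of_col_eq_mulVec hLdag.1 hrange]
  have hDD : D * D = diagonal w := by
    rw [diagonal_mul_diagonal]
    exact congrArg diagonal (funext fun i => Real.mul_self_sqrt (hw i).le)
  have hBW : Bm * diagonal w * Bmᵀ = Bm * D * (Bm * D)ᵀ := by
    rw [transpose_mul, hDt, ← hDD]
    simp only [Matrix.mul_assoc]
  have hS : D * (Bmᵀ * Ldag * Bm) * D = (Bm * D)ᵀ * (Ldag * (Bm * D)) := by
    rw [transpose_mul, hDt]
    simp only [Matrix.mul_assoc]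
  rw [hBW, hS]
  exact posSemidef_sub_mul_transpose_iff hLplus hY

/-- For a connected-graph PSD Laplacian `L₊` (kernel spanned by `𝟙`), `B₋` with columns
in the range of `L₊`, and `W₋` positive definite diagonal:
`L₊ − B₋W₋B₋ᵀ ⪰ 0` iff `‖√W₋ B₋ᵀ L₊† B₋ √W₋‖₂ ≤ 1`. -/
theorem stmt_12 {n p : ℕ} (Lplus Ldag : Matrix (Fin n) (Fin n) ℝ)
    (hLplus : Lplus.PosSemidef) (hL1 : Lplus *ᵥ (fun _ => (1 : ℝ)) = 0)
    (hker : ∀ x : Fin n → ℝ, Lplus *ᵥ x = 0 → ∃ c : ℝ, x = fun _ => c)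
    (hLdag : IsMoorePenrose Lplus Ldag)
    (Bm : Matrix (Fin n) (Fin p) ℝ)
    (hrange : ∀ c, ∃ x, (fun i => Bm i c) = Lplus *ᵥ x)
    (w : Fin p → ℝ) (hw : ∀ i, 0 < w i) :
    (Lplus - Bm * diagonal w * Bmᵀ).PosSemidef ↔
      ‖diagonal (fun i => Real.sqrt (w i)) * (Bmᵀ * Ldag * Bm) *
        diagonal (fun i => Real.sqrt (w i))‖ ≤ 1 :=
  stmt_12_general Lplus Ldag hLplus hLdag Bm hrange w hw
end

section
/- Let L ⪰ 0 be symmetric with L𝟙 = 0 on a connected graph (kernel spanned by 𝟙), and let E ∈ ℝ^{n×k} satisfy 𝟙^T E = 0. Then for every γ > 0: E^T L^† E ⪯ γ I_k holds if and only if γ L − E E^T ⪰ 0. -/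
/-!
`𝟙ᵀE = 0` makes the columns of `E` orthogonal to `ker L = span 𝟙`, so they lie in the range of
the symmetric matrix `L`, on which `L L†` is the identity: `L L† E = E`. Both implications then
come from writing `γ` times the target matrix as a sum of two positive semidefinite ones:
`γ (γL − EEᵀ) = (EEᵀ − γL) L† (EEᵀ − γL) + E (γI − Eᵀ L† E) Eᵀ` and
`γ (γI − Eᵀ L† E) = (γI − Eᵀ L† E)² + Eᵀ L† (γL − EEᵀ) L† E`.
-/

open Matrix

namespace Matrix

theorem PosSemidef.of_smul {ι : Type*} {A : Matrix ι ι ℝ} {γ : ℝ} (hγ : 0 < γ)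
    (h : (γ • A).PosSemidef) : A.PosSemidef := by
  simpa [smul_smul, hγ.ne'] using h.smul (inv_nonneg.2 hγ.le)

variable {ι κ R : Type*} [Fintype ι] [Fintype κ] [DecidableEq κ] [CommRing R]

theorem smul_smul_sub_mul_transpose_eq {L Lp : Matrix ι ι R} {E : Matrix ι κ R}
    (hL : L * Lp * L = L) (hE : L * Lp * E = E) (hE' : Eᵀ * Lp * L = Eᵀ) (γ : R) :
    γ • (γ • L - E * Eᵀ) =
      (E * Eᵀ - γ • L) * Lp * (E * Eᵀ - γ • L) + E * (γ • 1 - Eᵀ * Lp * E) * Eᵀ := by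
  have hP_left : L * Lp * (E * Eᵀ) = E * Eᵀ := by rw [← Matrix.mul_assoc, hE]
  have hP_right : E * Eᵀ * Lp * L = E * Eᵀ := by simp only [Matrix.mul_assoc, hE']
  have hconj : E * (γ • 1 - Eᵀ * Lp * E) * Eᵀ = γ • (E * Eᵀ) - E * Eᵀ * Lp * (E * Eᵀ) := by
    simp only [Matrix.mul_sub, Matrix.sub_mul, Matrix.mul_smul, Matrix.smul_mul, Matrix.mul_one,
      Matrix.mul_assoc]
  rw [hconj]
  generalize E * Eᵀ = P at hP_left hP_right ⊢
  simp only [Matrix.sub_mul, Matrix.mul_sub, Matrix.smul_mul, Matrix.mul_smul, hP_left, hP_right,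
    hL]
  module

theorem smul_smul_one_sub_transpose_mul_mul_eq {L Lp : Matrix ι ι R} (E : Matrix ι κ R)
    (hLp : Lp * L * Lp = Lp) (γ : R) :
    γ • (γ • 1 - Eᵀ * Lp * E) =
      (γ • 1 - Eᵀ * Lp * E) * (γ • 1 - Eᵀ * Lp * E) + Eᵀ * Lp * (γ • L - E * Eᵀ) * (Lp * E) := by
  have hG : Eᵀ * Lp * L * (Lp * E) = Eᵀ * Lp * E := by
    conv_rhs => rw [← hLp]
    simp only [Matrix.mul_assoc]
  have hG_sq : Eᵀ * Lp * (E * Eᵀ) * (Lp * E) = Eᵀ * Lp * E * (Eᵀ * Lp * E) := by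
    simp only [Matrix.mul_assoc]
  simp only [Matrix.sub_mul, Matrix.mul_sub, Matrix.smul_mul, Matrix.mul_smul, Matrix.mul_one,
    Matrix.one_mul, hG, hG_sq]
  module

end Matrix

namespace IsMoorePenrose

variable {n : ℕ} {L Lp : Matrix (Fin n) (Fin n) ℝ}

theorem transpose (h : IsMoorePenrose L Lp) : IsMoorePenrose Lᵀ Lpᵀ := by
  obtain ⟨h1, h2, h3, h4⟩ := h
  refine ⟨?_, ?_, ?_, ?_⟩
  · rw [← transpose_mul, ← transpose_mul, ← Matrix.mul_assoc, h1]
  · rw [← transpose_mul, ← transpose_mul, ← Matrix.mul_assoc, h2]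
  · rw [← transpose_mul]; exact congrArg Matrix.transpose h4
  · rw [← transpose_mul]; exact congrArg Matrix.transpose h3

theorem unique {A B : Matrix (Fin n) (Fin n) ℝ} (hA : IsMoorePenrose L A)
    (hB : IsMoorePenrose L B) : A = B := by
  obtain ⟨hA1, hA2, hA3, hA4⟩ := hA
  obtain ⟨hB1, hB2, hB3, hB4⟩ := hB
  have hA_eq : A = A * L * B := calc
    A = A * (L * A)ᵀ := by rw [hA3, ← Matrix.mul_assoc, hA2]
    _ = A * (L * B * (L * A))ᵀ := by rw [← Matrix.mul_assoc, hB1]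
    _ = A * L * A * (L * B) := by rw [transpose_mul, hA3, hB3]; simp only [Matrix.mul_assoc]
    _ = A * L * B := by rw [hA2, Matrix.mul_assoc]
  have hB_eq : B = A * L * B := calc
    B = (B * L)ᵀ * B := by rw [hB4, hB2]
    _ = (B * L * (A * L))ᵀ * B := by rw [Matrix.mul_assoc B, ← Matrix.mul_assoc L, hA1]
    _ = A * L * (B * L * B) := by rw [transpose_mul, hA4, hB4, Matrix.mul_assoc]
    _ = A * L * B := by rw [hB2]
  rw [hA_eq, ← hB_eq]

theorem transpose_eq_self (hL : Lᵀ = L) (h : IsMoorePenrose L Lp) : Lpᵀ = Lp :=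
  (hL ▸ h.transpose).unique h

theorem posSemidef (hL : L.PosSemidef) (h : IsMoorePenrose L Lp) : Lp.PosSemidef := by
  have hLp : Lp = Lpᴴ * L * Lp := by
    rw [conjTranspose_eq_transpose_of_trivial, h.transpose_eq_self hL.1, h.2.1]
  rw [hLp]
  exact hL.conjTranspose_mul_mul_same Lp

theorem mulVec_mulVec_eq_self (hL : Lᵀ = L) (h : IsMoorePenrose L Lp) {v : Fin n → ℝ}
    (hv : ∀ x, L *ᵥ x = 0 → v ⬝ᵥ x = 0) : L *ᵥ (Lp *ᵥ v) = v := by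
  obtain ⟨h1, -, h3, -⟩ := h
  set w := v - (L * Lp) *ᵥ v with hw
  have hLLLp : L * (L * Lp) = L := by
    calc L * (L * Lp) = (L * Lp * L)ᵀ := by rw [transpose_mul, h3, hL]
      _ = L := by rw [h1, hL]
  have hLw : L *ᵥ w = 0 := by
    rw [hw, mulVec_sub, mulVec_mulVec, hLLLp, sub_self]
  have hPw : (L * Lp) *ᵥ w = 0 := by
    rw [hw, mulVec_sub, mulVec_mulVec, ← Matrix.mul_assoc, h1, sub_self]
  have hww : w ⬝ᵥ w = 0 := calc
    w ⬝ᵥ w = v ⬝ᵥ w - ((L * Lp) *ᵥ v) ⬝ᵥ w := by rw [hw, sub_dotProduct]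
    _ = v ⬝ᵥ w - v ⬝ᵥ ((L * Lp) *ᵥ w) := by
      rw [dotProduct_comm _ w, dotProduct_mulVec, ← mulVec_transpose, h3, dotProduct_comm]
    _ = 0 := by rw [hv w hLw, hPw, dotProduct_zero, sub_zero]
  rw [mulVec_mulVec]
  exact (sub_eq_zero.1 (dotProduct_self_eq_zero.1 hww)).symm

theorem mul_mul_eq_self {κ : Type*} [Fintype κ] (hL : Lᵀ = L) (h : IsMoorePenrose L Lp)
    {E : Matrix (Fin n) κ ℝ} (hE : ∀ x, L *ᵥ x = 0 → x ᵥ* E = 0) : L * Lp * E = E := by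
  refine ext_iff_mulVec.2 fun u => ?_
  rw [← mulVec_mulVec, ← mulVec_mulVec]
  refine h.mulVec_mulVec_eq_self hL fun x hx => ?_
  rw [dotProduct_comm, dotProduct_mulVec, hE x hx, zero_dotProduct]

variable {κ : Type*} [Fintype κ] [DecidableEq κ]

theorem posSemidef_smul_sub_mul_transpose (hL : L.PosSemidef) (h : IsMoorePenrose L Lp)
    {E : Matrix (Fin n) κ ℝ} (hE : L * Lp * E = E) {γ : ℝ} (hγ : 0 < γ)
    (hG : (γ • 1 - Eᵀ * Lp * E).PosSemidef) : (γ • L - E * Eᵀ).PosSemidef := by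
  have hLT : Lᵀ = L := hL.1
  have hE' : Eᵀ * Lp * L = Eᵀ := by
    simpa [transpose_mul, hLT, h.transpose_eq_self hLT, Matrix.mul_assoc] using
      congrArg Matrix.transpose hE
  have hB : (E * Eᵀ - γ • L)ᴴ = E * Eᵀ - γ • L := by
    simp [conjTranspose_eq_transpose_of_trivial, transpose_sub, hLT]
  refine PosSemidef.of_smul hγ ?_
  rw [smul_smul_sub_mul_transpose_eq h.1 hE hE']
  refine .add ?_ ?_
  · simpa only [hB] using (h.posSemidef hL).conjTranspose_mul_mul_same (E * Eᵀ - γ • L)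
  · simpa only [conjTranspose_eq_transpose_of_trivial] using hG.mul_mul_conjTranspose_same E

theorem posSemidef_smul_one_sub (hL : Lᵀ = L) (h : IsMoorePenrose L Lp)
    {E : Matrix (Fin n) κ ℝ} {γ : ℝ} (hγ : 0 < γ) (hQ : (γ • L - E * Eᵀ).PosSemidef) :
    (γ • 1 - Eᵀ * Lp * E).PosSemidef := by
  have hLp : Lpᵀ = Lp := h.transpose_eq_self hL
  have hA : (γ • 1 - Eᵀ * Lp * E)ᴴ = γ • 1 - Eᵀ * Lp * E := by
    simp [conjTranspose_eq_transpose_of_trivial, transpose_sub, transpose_mul, hLp,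
      Matrix.mul_assoc]
  refine PosSemidef.of_smul hγ ?_
  rw [smul_smul_one_sub_transpose_mul_mul_eq E h.2.1]
  refine .add ?_ ?_
  · simpa only [hA] using
      posSemidef_conjTranspose_mul_self (γ • (1 : Matrix κ κ ℝ) - Eᵀ * Lp * E)
  · simpa only [conjTranspose_eq_transpose_of_trivial, transpose_mul, hLp] using
      hQ.conjTranspose_mul_mul_same (Lp * E)

theorem posSemidef_smul_one_sub_iff (hL : L.PosSemidef) (h : IsMoorePenrose L Lp)
    {E : Matrix (Fin n) κ ℝ} (hE : L * Lp * E = E) {γ : ℝ} (hγ : 0 < γ) :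
    (γ • 1 - Eᵀ * Lp * E).PosSemidef ↔ (γ • L - E * Eᵀ).PosSemidef :=
  ⟨h.posSemidef_smul_sub_mul_transpose hL hE hγ, h.posSemidef_smul_one_sub hL.1 hγ⟩

end IsMoorePenrose

theorem stmt_14_general {n k : ℕ} (L Lp : Matrix (Fin n) (Fin n) ℝ) (hL : L.PosSemidef)
    (hker : ∀ x : Fin n → ℝ, L *ᵥ x = 0 → ∃ c : ℝ, x = fun _ => c)
    (hLp : IsMoorePenrose L Lp)
    (E : Matrix (Fin n) (Fin k) ℝ) (hE : ∀ c, ∑ i, E i c = 0) :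
    ∀ γ : ℝ, 0 < γ →
      ((γ • (1 : Matrix (Fin k) (Fin k) ℝ) - Eᵀ * Lp * E).PosSemidef ↔
        (γ • L - E * Eᵀ).PosSemidef) := by
  intro γ hγ
  have hker_E : ∀ x, L *ᵥ x = 0 → x ᵥ* E = 0 := by
    intro x hx
    obtain ⟨c, rfl⟩ := hker x hx
    ext j
    simp [vecMul, dotProduct, ← Finset.mul_sum, hE]
  exact hLp.posSemidef_smul_one_sub_iff hL (hLp.mul_mul_eq_self hL.1 hker_E) hγ

/-- For a connected-graph PSD Laplacian `L` (kernel spanned by `𝟙`) and `E` with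
`𝟙ᵀE = 0`, and every `γ > 0`: `Eᵀ L† E ⪯ γ I` iff `γL − EEᵀ ⪰ 0`. -/
theorem stmt_14 {n k : ℕ} (L Lp : Matrix (Fin n) (Fin n) ℝ) (hL : L.PosSemidef)
    (hL1 : L *ᵥ (fun _ => (1 : ℝ)) = 0)
    (hker : ∀ x : Fin n → ℝ, L *ᵥ x = 0 → ∃ c : ℝ, x = fun _ => c)
    (hLp : IsMoorePenrose L Lp)
    (E : Matrix (Fin n) (Fin k) ℝ) (hE : ∀ c, ∑ i, E i c = 0) :
    ∀ γ : ℝ, 0 < γ →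
      ((γ • (1 : Matrix (Fin k) (Fin k) ℝ) - Eᵀ * Lp * E).PosSemidef ↔
        (γ • L - E * Eᵀ).PosSemidef) :=
  stmt_14_general L Lp hL hker hLp E hE
end
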